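/- Let 𝒲 ⊆ ℝ^d be a nonempty, closed, convex set bounded with diameter at most D, and assume that for every z ∈ Z the map w ↦ ℓ(w, z) is convex and L-Lipschitz on ℝ^d. Let η > 0 and T ∈ ℕ⁺. Let full-batch projected subgradient descent start from a fixed w_0 ∈ 𝒲 and iterate W_{t+1} = Π_𝒲(W_t − η · g_t) for t = 0, …, T−1, where g_t is a measurable selection of a subgradient of the empirical loss L_S at W_t and Π_𝒲 is the Euclidean projection onto 𝒲 (so the whole trajectory lies in 𝒲). Then the expected generalization error of the terminal iterate satisfies E[L_μ(W_T)] − E[L_S(W_T)] ≤ 8L²√T·η + 8L²Tη/n. Consequently, this bound holds uniformly over all such convex-Lipschitz-bounded problems and all data distributions μ. -/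

import Mathlib

open MeasureTheory ProbabilityTheory Filter Set
open scoped NNReal RealInnerProductSpace

/-!
Compare the given subgradient descent run `W` with the projected proximal point run `A(S)` on the
same sample, whose steps `p = w - η g` use a subgradient `g` at the *new* point `p`. Monotonicity
of subgradients gives `‖W_t - A_t‖² ≤ t η² L²`, so the population and the empirical risk of `W_T`
are within `η L² √T` of those of `A(S)`. The proximal step is nonexpansive in its centre and moves
by at most `η · 2L/n` when one sample point is replaced, so `A` is uniformly stable with constant
`2 η L T / n`; the exchange argument (swap a sample point with a fresh one) turns this into an
expected generalization gap of at most `2 η L² T / n`. Unlike `W`, which may depend on the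
randomness of the subgradient selection, `A` is a measurable function of the sample alone, as the
exchange argument requires.
-/

theorem le_zero_of_forall_le_mul {a b : ℝ} (h : ∀ t : ℝ, 0 < t → t ≤ 1 → a ≤ t * b) :
    a ≤ 0 := by
  have hlim : Tendsto (fun t : ℝ => t * b) (nhdsWithin 0 (Ioi 0)) (nhds 0) :=
    tendsto_nhdsWithin_of_tendsto_nhds (by simpa using (continuous_mul_const b).tendsto 0)
  refine ge_of_tendsto hlim ?_
  filter_upwards [Ioo_mem_nhdsGT (zero_lt_one' ℝ)] with t ht using h t ht.1 ht.2.le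

theorem measurable_iInf_of_continuous {Θ X : Type*} [MeasurableSpace Θ] [TopologicalSpace X]
    [SecondCountableTopology X] {H : Θ → X → ℝ} (hmeas : ∀ x, Measurable fun θ => H θ x)
    (hcont : ∀ θ, Continuous (H θ)) (C : Set X) : Measurable fun θ => ⨅ x : C, H θ ↑x := by
  obtain ⟨S, hS, hSd⟩ := TopologicalSpace.exists_countable_dense C
  have : Countable S := hS.to_subtype
  have heq : (fun θ => ⨅ x : C, H θ ↑x) = fun θ => ⨅ s : S, H θ s :=
    funext fun θ => (hSd.ciInf' ((hcont θ).comp continuous_subtype_val)).symm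
  rw [heq]
  exact Measurable.iInf fun s => hmeas _

/-- For closed `C`, `P θ ∈ C` iff the infimum of `H θ` over `C` is the global one. -/
theorem measurable_of_isMinOn_of_unique {Θ X : Type*} [MeasurableSpace Θ] [TopologicalSpace X]
    [SecondCountableTopology X] [MeasurableSpace X] [BorelSpace X] {H : Θ → X → ℝ} {P : Θ → X}
    (hmeas : ∀ x, Measurable fun θ => H θ x) (hcont : ∀ θ, Continuous (H θ))
    (hmin : ∀ θ, IsMinOn (H θ) univ (P θ))
    (hunique : ∀ θ x, IsMinOn (H θ) univ x → x = P θ)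
    (hattain : ∀ θ C, IsClosed C → C.Nonempty → ∃ c ∈ C, IsMinOn (H θ) C c) :
    Measurable P := by
  have hbdd : ∀ θ (C : Set X), BddBelow (range fun x : C => H θ x) := fun θ C =>
    ⟨H θ (P θ), by rintro _ ⟨x, rfl⟩; exact hmin θ (mem_univ _)⟩
  have hinf_meas := measurable_iInf_of_continuous hmeas hcont
  refine measurable_of_isClosed fun C hC => ?_
  rcases C.eq_empty_or_nonempty with rfl | hne
  · simp
  have : Nonempty C := hne.to_subtype
  have : Nonempty (univ : Set X) := hne.mono (subset_univ C) |>.to_subtype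
  have hpre : P ⁻¹' C = {θ | ⨅ x : C, H θ ↑x ≤ ⨅ x : (univ : Set X), H θ ↑x} := by
    ext θ
    constructor
    · intro hPC
      calc ⨅ x : C, H θ ↑x ≤ H θ (P θ) := ciInf_le (hbdd θ C) ⟨P θ, hPC⟩
        _ ≤ ⨅ x : (univ : Set X), H θ ↑x := le_ciInf fun x => hmin θ (mem_univ (x : X))
    · intro hle
      obtain ⟨c, hcC, hc⟩ := hattain θ C hC hne
      have : IsMinOn (H θ) univ c := fun x _ => calc
        H θ c ≤ ⨅ x : C, H θ ↑x := le_ciInf fun x => hc x.2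
        _ ≤ ⨅ x : (univ : Set X), H θ ↑x := hle
        _ ≤ H θ x := ciInf_le (hbdd θ univ) ⟨x, mem_univ x⟩
      rw [mem_preimage, ← hunique θ c this]
      exact hcC
  rw [hpre]
  exact measurableSet_le (hinf_meas C) (hinf_meas univ)

section Subgradient

variable {E : Type*} [NormedAddCommGroup E] [InnerProductSpace ℝ E]

def HasSubgradientAt (f : E → ℝ) (g x : E) : Prop := ∀ y, f x + ⟪g, y - x⟫ ≤ f y

variable {f f' : E → ℝ} {g g' x x' : E}

theorem HasSubgradientAt.inner_sub_sub_ge {c : ℝ≥0} (h : HasSubgradientAt f g x)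
    (h' : HasSubgradientAt f' g' x') (hc : LipschitzWith c (f - f')) :
    -(c * ‖x - x'‖) ≤ ⟪g - g', x - x'⟫ := by
  have hx : f x + ⟪g, x' - x⟫ ≤ f x' := h x'
  have hx' : f' x' + ⟪g', x - x'⟫ ≤ f' x := h' x
  have hdiff : f x' - f' x' ≤ f x - f' x + c * ‖x - x'‖ := by
    simpa [dist_eq_norm, norm_sub_rev] using hc.le_add_mul x' x
  have hflip : ⟪g, x' - x⟫ = -⟪g, x - x'⟫ := by rw [← inner_neg_right, neg_sub]
  rw [inner_sub_left]
  linarith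

theorem HasSubgradientAt.inner_sub_sub_nonneg (h : HasSubgradientAt f g x)
    (h' : HasSubgradientAt f g' x') : 0 ≤ ⟪g - g', x - x'⟫ := by
  simpa using h.inner_sub_sub_ge h' (c := 0) (by simp)

theorem HasSubgradientAt.norm_le {K : ℝ≥0} (h : HasSubgradientAt f g x)
    (hf : LipschitzWith K f) : ‖g‖ ≤ K := by
  have hstep : f x + ‖g‖ ^ 2 ≤ f (x + g) := by
    simpa [real_inner_self_eq_norm_sq] using h (x + g)
  have hlip : f (x + g) ≤ f x + K * ‖g‖ := by simpa [dist_eq_norm] using hf.le_add_mul (x + g) x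
  nlinarith [norm_nonneg g]

end Subgradient

section ProxObjective

variable {E : Type*} [NormedAddCommGroup E]

noncomputable def proxObjective (η : ℝ) (f : E → ℝ) (w x : E) : ℝ :=
  f x + ‖x - w‖ ^ 2 / (2 * η)

theorem continuous_proxObjective {η : ℝ} {f : E → ℝ} {w : E} (hf : Continuous f) :
    Continuous (proxObjective η f w) := by
  unfold proxObjective; fun_prop

end ProxObjective

section Prox

variable {E : Type*} [NormedAddCommGroup E] [InnerProductSpace ℝ E]

noncomputable def prox (η : ℝ) (f : E → ℝ) (w : E) : E :=
  Classical.epsilon fun p => IsMinOn (proxObjective η f w) univ p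

variable {η : ℝ} {f f' : E → ℝ} {w p : E}

theorem sub_smul_inv_smul_sub (hη : 0 < η) (w p : E) : w - η • (η⁻¹ • (w - p)) = p := by
  rw [smul_smul, mul_inv_cancel₀ hη.ne', one_smul, sub_sub_cancel]

/-- First-order optimality: comparing `p` with `p + t (v - p)` and letting `t → 0`. -/
theorem HasSubgradientAt.of_isMinOn_proxObjective (hη : 0 < η) (hf : ConvexOn ℝ univ f)
    (hp : IsMinOn (proxObjective η f w) univ p) :
    HasSubgradientAt f (η⁻¹ • (w - p)) p := by
  intro v
  rw [real_inner_smul_left]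
  suffices f p - f v + η⁻¹ * ⟪w - p, v - p⟫ ≤ 0 by linarith
  refine le_zero_of_forall_le_mul (b := ‖v - p‖ ^ 2 / (2 * η)) fun t ht0 ht1 => ?_
  have hmin : proxObjective η f w p ≤ proxObjective η f w (p + t • (v - p)) := hp (mem_univ _)
  have hconv : f (p + t • (v - p)) ≤ (1 - t) * f p + t * f v := by
    rw [show p + t • (v - p) = (1 - t) • p + t • v by module]
    exact hf.2 (mem_univ p) (mem_univ v) (sub_nonneg.2 ht1) ht0.le (sub_add_cancel 1 t)
  have hsq : ‖p + t • (v - p) - w‖ ^ 2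
      = ‖p - w‖ ^ 2 - 2 * t * ⟪w - p, v - p⟫ + t ^ 2 * ‖v - p‖ ^ 2 := by
    rw [show p + t • (v - p) - w = t • (v - p) - (w - p) by abel, norm_sub_sq_real,
      real_inner_smul_left, norm_smul, Real.norm_of_nonneg ht0.le, real_inner_comm,
      norm_sub_rev w p]
    ring
  simp only [proxObjective, hsq] at hmin
  have hsplit : (‖p - w‖ ^ 2 - 2 * t * ⟪w - p, v - p⟫ + t ^ 2 * ‖v - p‖ ^ 2) / (2 * η)
      = ‖p - w‖ ^ 2 / (2 * η) - t * (η⁻¹ * ⟪w - p, v - p⟫) + t * (t * (‖v - p‖ ^ 2 / (2 * η))) := by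
    field_simp
  have key : t * (f p - f v + η⁻¹ * ⟪w - p, v - p⟫) ≤ t * (t * (‖v - p‖ ^ 2 / (2 * η))) := by
    rw [hsplit] at hmin
    linarith
  exact le_of_mul_le_mul_left key ht0

theorem isMinOn_proxObjective_unique (hη : 0 < η) (hf : ConvexOn ℝ univ f) {q : E}
    (hp : IsMinOn (proxObjective η f w) univ p) (hq : IsMinOn (proxObjective η f w) univ q) :
    p = q := by
  have hmono := (HasSubgradientAt.of_isMinOn_proxObjective hη hf hp).inner_sub_sub_nonneg
    (HasSubgradientAt.of_isMinOn_proxObjective hη hf hq)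
  rw [← smul_sub, sub_sub_sub_cancel_left, real_inner_smul_left, ← neg_sub p q, inner_neg_left,
    real_inner_self_eq_norm_sq] at hmono
  have : ‖p - q‖ ^ 2 ≤ 0 := by nlinarith [inv_pos.2 hη]
  simpa [sub_eq_zero] using this

variable [FiniteDimensional ℝ E] {K : ℝ≥0}

theorem tendsto_proxObjective_cocompact (hη : 0 < η) (hf : LipschitzWith K f) :
    Tendsto (proxObjective η f w) (cocompact E) atTop := by
  have hlow : ∀ x, f w - η * K ^ 2 + ‖x - w‖ ^ 2 / (4 * η) ≤ proxObjective η f w x := by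
    intro x
    have h1 := hf.le_add_mul w x
    rw [dist_eq_norm, norm_sub_rev] at h1
    have h2 : (K : ℝ) * ‖x - w‖ ≤ η * K ^ 2 + ‖x - w‖ ^ 2 / (4 * η) := by
      field_simp
      nlinarith [sq_nonneg (‖x - w‖ - 2 * η * K)]
    have h3 : ‖x - w‖ ^ 2 / (4 * η) + ‖x - w‖ ^ 2 / (4 * η) = ‖x - w‖ ^ 2 / (2 * η) := by
      field_simp; ring
    unfold proxObjective
    linarith
  refine tendsto_atTop_mono hlow (tendsto_atTop_add_const_left _ _ ?_)
  refine (Tendsto.atTop_div_const (by positivity) ((tendsto_pow_atTop two_ne_zero).comp ?_))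
  simpa [dist_eq_norm] using tendsto_dist_right_cocompact_atTop w

theorem exists_isMinOn_proxObjective (hη : 0 < η) (hf : LipschitzWith K f) {C : Set E}
    (hC : IsClosed C) (hne : C.Nonempty) : ∃ p ∈ C, IsMinOn (proxObjective η f w) C p := by
  obtain ⟨c, hc⟩ := hne
  exact (continuous_proxObjective hf.continuous).continuousOn.exists_isMinOn' hC hc
    (((tendsto_proxObjective_cocompact hη hf).eventually_ge_atTop _).filter_mono inf_le_left)

theorem isMinOn_prox (hη : 0 < η) (hf : LipschitzWith K f) :
    IsMinOn (proxObjective η f w) univ (prox η f w) := by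
  obtain ⟨p, -, hp⟩ := exists_isMinOn_proxObjective (w := w) hη hf isClosed_univ univ_nonempty
  exact Classical.epsilon_spec ⟨p, hp⟩

theorem hasSubgradientAt_prox (hη : 0 < η) (hf : ConvexOn ℝ univ f) (hl : LipschitzWith K f) :
    HasSubgradientAt f (η⁻¹ • (w - prox η f w)) (prox η f w) :=
  .of_isMinOn_proxObjective hη hf (isMinOn_prox hη hl)

theorem measurable_prox [MeasurableSpace E] [BorelSpace E] {Θ : Type*} [MeasurableSpace Θ]
    {F : Θ → E → ℝ} {ψ : Θ → E} (hη : 0 < η) (hFmeas : ∀ x, Measurable fun θ => F θ x)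
    (hFconv : ∀ θ, ConvexOn ℝ univ (F θ)) (hFlip : ∀ θ, LipschitzWith K (F θ))
    (hψ : Measurable ψ) : Measurable fun θ => prox η (F θ) (ψ θ) :=
  measurable_of_isMinOn_of_unique (H := fun θ => proxObjective η (F θ) (ψ θ))
    (fun x => (hFmeas x).add (by fun_prop))
    (fun θ => continuous_proxObjective (hFlip θ).continuous)
    (fun θ => isMinOn_prox hη (hFlip θ))
    (fun θ _ hx => isMinOn_proxObjective_unique hη (hFconv θ) hx (isMinOn_prox hη (hFlip θ)))
    (fun θ _ hC hne => exists_isMinOn_proxObjective hη (hFlip θ) hC hne)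

theorem norm_prox_sub_prox_le {w' : E} {c : ℝ≥0} (hη : 0 < η) (hf : ConvexOn ℝ univ f)
    (hf' : ConvexOn ℝ univ f') (hfl : LipschitzWith K f) (hfl' : LipschitzWith K f')
    (hc : LipschitzWith c (f - f')) :
    ‖prox η f w - prox η f' w'‖ ≤ ‖w - w'‖ + η * c := by
  set p := prox η f w
  set p' := prox η f' w'
  have hmono := (hasSubgradientAt_prox hη hf hfl (w := w)).inner_sub_sub_ge
    (hasSubgradientAt_prox hη hf' hfl' (w := w')) hc
  rw [← smul_sub, real_inner_smul_left] at hmono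
  have hsq : ‖p - p'‖ ^ 2 = ⟪w - w', p - p'⟫ - ⟪(w - p) - (w' - p'), p - p'⟫ := by
    rw [← inner_sub_left, ← real_inner_self_eq_norm_sq]
    congr 1
    abel
  have hcs := real_inner_le_norm (w - w') (p - p')
  have : ‖p - p'‖ * ‖p - p'‖ ≤ (‖w - w'‖ + η * c) * ‖p - p'‖ := by
    have := mul_le_mul_of_nonneg_left hmono hη.le
    rw [← mul_assoc, mul_inv_cancel₀ hη.ne', one_mul] at this
    nlinarith
  rcases (norm_nonneg (p - p')).eq_or_lt with h0 | h0
  · rw [← h0]; positivity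
  · exact le_of_mul_le_mul_right this h0

theorem norm_sub_smul_sub_prox_sq_le {x y g : E} (hη : 0 < η) (hf : ConvexOn ℝ univ f)
    (hfl : LipschitzWith K f) (hg : HasSubgradientAt f g x) :
    ‖x - η • g - prox η f y‖ ^ 2 ≤ ‖x - y‖ ^ 2 + η ^ 2 * K ^ 2 := by
  set p := prox η f y
  set gp := η⁻¹ • (y - p)
  have hp : p = y - η • gp := (sub_smul_inv_smul_sub hη y p).symm
  have hmono : 0 ≤ ⟪g - gp, x - p⟫ := hg.inner_sub_sub_nonneg (hasSubgradientAt_prox hη hf hfl)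
  have hgK : ‖g‖ ^ 2 ≤ K ^ 2 := pow_le_pow_left₀ (norm_nonneg _) (hg.norm_le hfl) 2
  have hstep : ‖x - η • g - p‖ ^ 2
      = ‖x - y‖ ^ 2 - 2 * η * ⟪x - y, g - gp⟫ + η ^ 2 * ‖g - gp‖ ^ 2 := by
    rw [hp, show x - η • g - (y - η • gp) = (x - y) - η • (g - gp) by module, norm_sub_sq_real,
      real_inner_smul_right, norm_smul, mul_pow, Real.norm_eq_abs, sq_abs]
    ring
  have hcross : ⟪g - gp, x - p⟫ = ⟪x - y, g - gp⟫ + η * (⟪g, gp⟫ - ‖gp‖ ^ 2) := by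
    rw [hp, show x - (y - η • gp) = (x - y) + η • gp by abel, inner_add_right,
      real_inner_smul_right, real_inner_comm (x - y), inner_sub_left g gp gp,
      real_inner_self_eq_norm_sq]
  rw [hstep, norm_sub_sq_real g gp]
  nlinarith [mul_nonneg hη.le hmono, mul_le_mul_of_nonneg_left hgK (sq_nonneg η),
    sq_nonneg (η * ‖gp‖)]

end Prox

section Projection

variable {E : Type*} [NormedAddCommGroup E] [InnerProductSpace ℝ E]

theorem Convex.lipschitzWith_one_of_isNearest {𝒲 : Set E} (h𝒲 : Convex ℝ 𝒲) {proj : E → E}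
    (hmem : ∀ x, proj x ∈ 𝒲) (hnear : ∀ x, ∀ w ∈ 𝒲, ‖x - proj x‖ ≤ ‖x - w‖) :
    LipschitzWith 1 proj := by
  have hvar : ∀ x, ∀ w ∈ 𝒲, ⟪x - proj x, w - proj x⟫ ≤ 0 := by
    intro x
    have : Nonempty 𝒲 := ⟨⟨proj x, hmem x⟩⟩
    refine (norm_eq_iInf_iff_real_inner_le_zero h𝒲 (hmem x)).1 (le_antisymm ?_ ?_)
    · exact le_ciInf fun w => hnear x w w.2
    · exact ciInf_le (f := fun w : 𝒲 => ‖x - w‖) ⟨0, by rintro _ ⟨w, rfl⟩; positivity⟩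
        ⟨proj x, hmem x⟩
  refine LipschitzWith.of_dist_le_mul fun x y => ?_
  rw [NNReal.coe_one, one_mul, dist_eq_norm, dist_eq_norm]
  have hx := hvar x (proj y) (hmem y)
  have hy := hvar y (proj x) (hmem x)
  have hsq : ‖proj x - proj y‖ ^ 2 ≤ ⟪x - y, proj x - proj y⟫ := by
    have hsplit : x - y = (x - proj x) + (proj x - proj y) - (y - proj y) := by abel
    have hflip : ⟪x - proj x, proj x - proj y⟫ = -⟪x - proj x, proj y - proj x⟫ := by
      rw [← inner_neg_right, neg_sub]
    rw [hsplit, inner_sub_left, inner_add_left, real_inner_self_eq_norm_sq, hflip]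
    linarith
  have hcs := real_inner_le_norm (x - y) (proj x - proj y)
  rcases (norm_nonneg (proj x - proj y)).eq_or_lt with h0 | h0
  · rw [← h0]; positivity
  · nlinarith

end Projection

section ProxTrajectory

variable {E : Type*} [NormedAddCommGroup E] [InnerProductSpace ℝ E] [FiniteDimensional ℝ E]

noncomputable def proxTraj (η : ℝ) (f : E → ℝ) (proj : E → E) (w₀ : E) : ℕ → E
  | 0 => w₀
  | t + 1 => proj (prox η f (proxTraj η f proj w₀ t))

variable {η : ℝ} {f f' : E → ℝ} {proj : E → E} {w₀ : E} {K : ℝ≥0}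

theorem norm_proxTraj_sub_proxTraj_le {c : ℝ≥0} (hη : 0 < η) (hproj : LipschitzWith 1 proj)
    (hf : ConvexOn ℝ univ f) (hf' : ConvexOn ℝ univ f') (hfl : LipschitzWith K f)
    (hfl' : LipschitzWith K f') (hc : LipschitzWith c (f - f')) (t : ℕ) :
    ‖proxTraj η f proj w₀ t - proxTraj η f' proj w₀ t‖ ≤ t * (η * c) := by
  induction t with
  | zero => simp [proxTraj]
  | succ t ih =>
    calc ‖proxTraj η f proj w₀ (t + 1) - proxTraj η f' proj w₀ (t + 1)‖
        ≤ ‖prox η f (proxTraj η f proj w₀ t) - prox η f' (proxTraj η f' proj w₀ t)‖ := by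
          simpa [proxTraj, dist_eq_norm] using hproj.dist_le_mul _ _
      _ ≤ ‖proxTraj η f proj w₀ t - proxTraj η f' proj w₀ t‖ + η * c :=
          norm_prox_sub_prox_le hη hf hf' hfl hfl' hc
      _ ≤ (t + 1 : ℕ) * (η * c) := by push_cast; linarith

theorem norm_sub_proxTraj_le (hη : 0 < η) (hproj : LipschitzWith 1 proj)
    (hf : ConvexOn ℝ univ f) (hfl : LipschitzWith K f) {x g : ℕ → E} (hx0 : x 0 = w₀)
    (hx : ∀ t, x (t + 1) = proj (x t - η • g t)) (hg : ∀ t, HasSubgradientAt f (g t) (x t))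
    (t : ℕ) : ‖x t - proxTraj η f proj w₀ t‖ ≤ √t * (η * K) := by
  have hsq : ∀ t : ℕ, ‖x t - proxTraj η f proj w₀ t‖ ^ 2 ≤ t * (η * K) ^ 2 := by
    intro t
    induction t with
    | zero => simp [proxTraj, hx0]
    | succ t ih =>
      have hlip : ‖x (t + 1) - proxTraj η f proj w₀ (t + 1)‖
          ≤ ‖x t - η • g t - prox η f (proxTraj η f proj w₀ t)‖ := by
        simpa [proxTraj, hx, dist_eq_norm] using hproj.dist_le_mul _ _
      have hstep := norm_sub_smul_sub_prox_sq_le (y := proxTraj η f proj w₀ t) hη hf hfl (hg t)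
      calc ‖x (t + 1) - proxTraj η f proj w₀ (t + 1)‖ ^ 2
          ≤ ‖x t - η • g t - prox η f (proxTraj η f proj w₀ t)‖ ^ 2 := by gcongr
        _ ≤ (t + 1 : ℕ) * (η * K) ^ 2 := by push_cast; linarith
  rw [← Real.sqrt_sq (norm_nonneg _), ← Real.sqrt_sq (by positivity : 0 ≤ η * K),
    ← Real.sqrt_mul (Nat.cast_nonneg t)]
  exact Real.sqrt_le_sqrt (hsq t)

theorem measurable_proxTraj [MeasurableSpace E] [BorelSpace E] {Θ : Type*} [MeasurableSpace Θ]
    {F : Θ → E → ℝ} (hη : 0 < η) (hproj : Measurable proj)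
    (hFmeas : ∀ x, Measurable fun θ => F θ x) (hFconv : ∀ θ, ConvexOn ℝ univ (F θ))
    (hFlip : ∀ θ, LipschitzWith K (F θ)) (t : ℕ) :
    Measurable fun θ => proxTraj η (F θ) proj w₀ t := by
  induction t with
  | zero => exact measurable_const
  | succ t ih => exact hproj.comp (measurable_prox hη hFmeas hFconv hFlip ih)

end ProxTrajectory

section Integral

variable {α : Type*} [MeasurableSpace α] {μ : Measure α} {f g : α → ℝ} {c : ℝ}

theorem integrable_of_abs_sub_le [IsFiniteMeasure μ] (hg : Integrable g μ)
    (hf : AEStronglyMeasurable f μ) (h : ∀ x, |f x - g x| ≤ c) : Integrable f μ := by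
  have hdiff : Integrable (f - g) μ :=
    (integrable_const c).mono' (hf.sub hg.aestronglyMeasurable) (.of_forall fun x => h x)
  simpa using hdiff.add hg

theorem abs_integral_sub_integral_le [IsProbabilityMeasure μ] (hg : Integrable g μ)
    (hf : AEStronglyMeasurable f μ) (h : ∀ x, |f x - g x| ≤ c) :
    |∫ x, f x ∂μ - ∫ x, g x ∂μ| ≤ c := by
  rw [← integral_sub (integrable_of_abs_sub_le hg hf h) hg]
  simpa using norm_integral_le_of_norm_le_const (μ := μ) (f := fun x => f x - g x)
    (.of_forall fun x => by simpa using h x)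

theorem MeasureTheory.MeasurePreserving.integral_comp_of_aestronglyMeasurable {β : Type*}
    [MeasurableSpace β] {ν : Measure β} {S : α → β} (hS : MeasurePreserving S μ ν)
    {φ : β → ℝ} (hφ : AEStronglyMeasurable φ ν) : ∫ x, φ (S x) ∂μ = ∫ y, φ y ∂ν := by
  have h := integral_map hS.measurable.aemeasurable (hS.map_eq ▸ hφ)
  rw [hS.map_eq] at h
  exact h.symm

theorem MeasureTheory.MeasurePreserving.abs_integral_sub_integral_le [IsProbabilityMeasure μ]
    {β : Type*} [MeasurableSpace β] {ν : Measure β} {S : α → β} (hS : MeasurePreserving S μ ν)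
    {φ : β → ℝ} {ψ : α → ℝ} (hφ : Measurable φ) (hψ : Integrable ψ μ)
    (h : ∀ x, |φ (S x) - ψ x| ≤ c) : |∫ y, φ y ∂ν - ∫ x, ψ x ∂μ| ≤ c := by
  rw [← hS.integral_comp_of_aestronglyMeasurable hφ.aestronglyMeasurable]
  exact _root_.abs_integral_sub_integral_le hψ (hφ.comp hS.measurable).aestronglyMeasurable h

theorem lipschitzWith_integral {X : Type*} [PseudoMetricSpace X] [IsProbabilityMeasure μ]
    {F : X → α → ℝ} {K : ℝ≥0} (hint : ∀ x, Integrable (F x) μ)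
    (hF : ∀ a, LipschitzWith K (F · a)) : LipschitzWith K fun x => ∫ a, F x a ∂μ := by
  refine LipschitzWith.of_dist_le_mul fun x y => ?_
  rw [Real.dist_eq]
  exact abs_integral_sub_integral_le (hint y) (hint x).aestronglyMeasurable fun a => by
    simpa [Real.dist_eq] using (hF a).dist_le_mul x y

end Integral

section EmpiricalRisk

variable {E 𝒵 : Type*} {n : ℕ}

noncomputable def empiricalRisk (ℓ : E → 𝒵 → ℝ) (s : Fin n → 𝒵) (w : E) : ℝ :=
  (n : ℝ)⁻¹ * ∑ i, ℓ w (s i)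

variable {ℓ : E → 𝒵 → ℝ}

theorem convexOn_empiricalRisk [AddCommGroup E] [Module ℝ E]
    (hconv : ∀ z, ConvexOn ℝ univ (ℓ · z)) (s : Fin n → 𝒵) :
    ConvexOn ℝ univ (empiricalRisk ℓ s) := by
  have hsum : ConvexOn ℝ univ (∑ i, (ℓ · (s i))) :=
    Finset.sum_induction _ (ConvexOn ℝ univ) (fun _ _ => ConvexOn.add)
      (convexOn_const 0 convex_univ) fun i _ => hconv (s i)
  refine (hsum.smul (inv_nonneg.2 (Nat.cast_nonneg n))).congr fun w _ => ?_
  simp [empiricalRisk, Finset.sum_apply]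

theorem measurable_empiricalRisk [MeasurableSpace E] [MeasurableSpace 𝒵]
    (hℓ : Measurable fun p : E × 𝒵 => ℓ p.1 p.2) {w : (Fin n → 𝒵) → E} (hw : Measurable w) :
    Measurable fun s => empiricalRisk ℓ s (w s) :=
  (Finset.measurable_sum _ fun i _ => hℓ.comp (hw.prodMk (measurable_pi_apply i))).const_mul _

variable [PseudoMetricSpace E] {L : ℝ≥0}

theorem lipschitzWith_empiricalRisk (hLip : ∀ z, LipschitzWith L (ℓ · z)) (s : Fin n → 𝒵) :
    LipschitzWith L (empiricalRisk ℓ s) := by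
  refine LipschitzWith.of_le_add_mul L fun a b => ?_
  have hsum : ∑ i, ℓ a (s i) ≤ ∑ i, ℓ b (s i) + n * (L * dist a b) := by
    simpa [Finset.sum_add_distrib] using
      Finset.sum_le_sum fun i (_ : i ∈ Finset.univ) => (hLip (s i)).le_add_mul a b
  rcases n.eq_zero_or_pos with rfl | hn
  · simp [empiricalRisk]; positivity
  · have hn' : (0 : ℝ) < n := by exact_mod_cast hn
    unfold empiricalRisk
    rw [inv_mul_le_iff₀ hn', mul_add, mul_inv_cancel_left₀ hn'.ne']
    linarith

theorem lipschitzWith_empiricalRisk_sub (hLip : ∀ z, LipschitzWith L (ℓ · z))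
    {s s' : Fin n → 𝒵} {i : Fin n} (hss' : ∀ j, j ≠ i → s j = s' j) :
    LipschitzWith (2 * L / n) (empiricalRisk ℓ s - empiricalRisk ℓ s') := by
  have hdiff : empiricalRisk ℓ s - empiricalRisk ℓ s'
      = fun w => (n : ℝ)⁻¹ * (ℓ w (s i) - ℓ w (s' i)) := by
    funext w
    simp only [Pi.sub_apply, empiricalRisk, ← mul_sub, ← Finset.sum_sub_distrib]
    rw [Fintype.sum_eq_single i fun j hj => by rw [hss' j hj, sub_self]]
  rw [hdiff]
  refine LipschitzWith.of_dist_le_mul fun a b => ?_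
  have ha := (hLip (s i)).dist_le_mul a b
  have hb := (hLip (s' i)).dist_le_mul a b
  rw [Real.dist_eq] at *
  rw [← mul_sub, abs_mul, abs_inv, Nat.abs_cast, NNReal.coe_div, NNReal.coe_mul,
    NNReal.coe_natCast, div_eq_inv_mul, mul_assoc, mul_assoc]
  gcongr
  calc |ℓ a (s i) - ℓ a (s' i) - (ℓ b (s i) - ℓ b (s' i))|
      ≤ |ℓ a (s i) - ℓ b (s i)| + |ℓ a (s' i) - ℓ b (s' i)| := by
        rw [show ℓ a (s i) - ℓ a (s' i) - (ℓ b (s i) - ℓ b (s' i))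
          = (ℓ a (s i) - ℓ b (s i)) - (ℓ a (s' i) - ℓ b (s' i)) by ring]
        exact abs_sub _ _
    _ ≤ 2 * (L * dist a b) := by linarith

end EmpiricalRisk

theorem norm_proxTraj_empiricalRisk_sub_le {E 𝒵 : Type*} [NormedAddCommGroup E]
    [InnerProductSpace ℝ E] [FiniteDimensional ℝ E] {n : ℕ} {ℓ : E → 𝒵 → ℝ} {L : ℝ≥0} {η : ℝ}
    {proj : E → E} {w₀ : E} (hη : 0 < η) (hproj : LipschitzWith 1 proj)
    (hconv : ∀ z, ConvexOn ℝ univ (ℓ · z)) (hLip : ∀ z, LipschitzWith L (ℓ · z))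
    {s s' : Fin n → 𝒵} {i : Fin n} (hss' : ∀ j, j ≠ i → s j = s' j) (t : ℕ) :
    ‖proxTraj η (empiricalRisk ℓ s) proj w₀ t - proxTraj η (empiricalRisk ℓ s') proj w₀ t‖
      ≤ t * (η * (2 * L / n)) := by
  simpa using norm_proxTraj_sub_proxTraj_le hη hproj (convexOn_empiricalRisk hconv s)
    (convexOn_empiricalRisk hconv s') (lipschitzWith_empiricalRisk hLip s)
    (lipschitzWith_empiricalRisk hLip s') (lipschitzWith_empiricalRisk_sub hLip hss') t

section ReplaceOneStability

variable {𝒵 : Type*} [MeasurableSpace 𝒵] (μ : Measure 𝒵) [IsProbabilityMeasure μ] {n : ℕ}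

theorem measurePreserving_init_last :
    MeasurePreserving (fun u : Fin (n + 1) → 𝒵 => (Fin.init u, u (Fin.last n)))
      (Measure.pi fun _ => μ) ((Measure.pi fun _ => μ).prod μ) := by
  convert (Measure.measurePreserving_swap).comp
    (measurePreserving_piFinSuccAbove (fun _ : Fin (n + 1) => μ) (Fin.last n)) using 1
  funext u
  simp [MeasurableEquiv.piFinSuccAbove_apply, Fin.insertNthEquiv, Fin.removeNth_last]

theorem measurePreserving_comp_perm {ι : Type*} [Fintype ι] (e : Equiv.Perm ι) :
    MeasurePreserving (fun u : ι → 𝒵 => u ∘ e) (Measure.pi fun _ => μ)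
      (Measure.pi fun _ => μ) := by
  convert measurePreserving_arrowCongr' (fun _ => μ) (fun _ => μ) e.symm (.refl 𝒵)
    fun _ => .id μ using 1
  ext u i
  simp [MeasurableEquiv.arrowCongr', Equiv.arrowCongr', Equiv.arrowCongr_apply]

variable {μ}

/-- The exchange argument: resampling coordinate `i` with a fresh point `z` and swapping the roles
of `s i` and `z` leaves the law of `(s, z)` invariant. -/
theorem integral_integral_le_integral_apply_add {F : (Fin n → 𝒵) → 𝒵 → ℝ} {β : ℝ}
    (hF : Measurable fun p : (Fin n → 𝒵) × 𝒵 => F p.1 p.2)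
    (hstable : ∀ s s' i, (∀ j, j ≠ i → s j = s' j) → ∀ z, |F s z - F s' z| ≤ β)
    (i : Fin n) (hint : Integrable (fun s => F s (s i)) (Measure.pi fun _ => μ)) :
    ∫ s, ∫ z, F s z ∂μ ∂(Measure.pi fun _ => μ) ≤ ∫ s, F s (s i) ∂(Measure.pi fun _ => μ) + β := by
  set ρ := Measure.pi fun _ : Fin (n + 1) => μ
  set σ := Equiv.swap i.castSucc (Fin.last n)
  have hpair := measurePreserving_init_last μ (n := n)
  have hinit : MeasurePreserving Fin.init ρ (Measure.pi fun _ => μ) :=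
    (measurePreserving_fst).comp hpair
  have hperm := measurePreserving_comp_perm μ σ
  set Φ : (Fin (n + 1) → 𝒵) → ℝ := fun u => F (Fin.init u) (u (Fin.last n))
  have hΦ : Measurable Φ := hF.comp hpair.measurable
  have hswap : ∀ u, |Φ (u ∘ σ) - F (Fin.init u) (u i.castSucc)| ≤ β := by
    intro u
    have hlast : (u ∘ σ) (Fin.last n) = u i.castSucc := by simp [σ]
    simp only [Φ, hlast]
    refine hstable _ _ i (fun j hj => ?_) _
    simp [Fin.init, σ, Equiv.swap_apply_of_ne_of_ne, Fin.castSucc_injective _ |>.ne hj,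
      (Fin.castSucc_lt_last j).ne]
  have hΨ : Integrable (fun u => F (Fin.init u) (u i.castSucc)) ρ :=
    (hinit.integrable_comp hint.aestronglyMeasurable).2 hint
  have hΦσ : Integrable (fun u => Φ (u ∘ σ)) ρ :=
    integrable_of_abs_sub_le hΨ (hΦ.comp hperm.measurable).aestronglyMeasurable hswap
  have hΦint : Integrable Φ ρ := (hperm.integrable_comp hΦ.aestronglyMeasurable).1 hΦσ
  have hprod : Integrable (fun p : (Fin n → 𝒵) × 𝒵 => F p.1 p.2)
      ((Measure.pi fun _ => μ).prod μ) :=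
    (hpair.integrable_comp hF.aestronglyMeasurable).1 hΦint
  calc ∫ s, ∫ z, F s z ∂μ ∂(Measure.pi fun _ => μ)
      = ∫ u, Φ u ∂ρ := by
        rw [← integral_prod _ hprod,
          ← hpair.integral_comp_of_aestronglyMeasurable hF.aestronglyMeasurable]
    _ = ∫ u, Φ (u ∘ σ) ∂ρ :=
        (hperm.integral_comp_of_aestronglyMeasurable hΦ.aestronglyMeasurable).symm
    _ ≤ ∫ u, F (Fin.init u) (u i.castSucc) ∂ρ + β := by
        linarith [(abs_sub_le_iff.1 (abs_integral_sub_integral_le hΨ hΦσ.aestronglyMeasurable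
          hswap)).1]
    _ = ∫ s, F s (s i) ∂(Measure.pi fun _ => μ) + β := by
        rw [← hinit.integral_comp_of_aestronglyMeasurable hint.aestronglyMeasurable]
        rfl

theorem integral_integral_le_integral_empirical_add {F : (Fin n → 𝒵) → 𝒵 → ℝ} {β : ℝ}
    (hn : 0 < n) (hF : Measurable fun p : (Fin n → 𝒵) × 𝒵 => F p.1 p.2)
    (hstable : ∀ s s' i, (∀ j, j ≠ i → s j = s' j) → ∀ z, |F s z - F s' z| ≤ β)
    (hint : ∀ i, Integrable (fun s => F s (s i)) (Measure.pi fun _ => μ)) :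
    ∫ s, ∫ z, F s z ∂μ ∂(Measure.pi fun _ => μ)
      ≤ ∫ s, (n : ℝ)⁻¹ * ∑ i, F s (s i) ∂(Measure.pi fun _ => μ) + β := by
  have hn' : (n : ℝ) ≠ 0 := by positivity
  rw [integral_const_mul, integral_finsetSum _ fun i _ => hint i]
  calc ∫ s, ∫ z, F s z ∂μ ∂(Measure.pi fun _ => μ)
      = (n : ℝ)⁻¹ * ∑ _i : Fin n, ∫ s, ∫ z, F s z ∂μ ∂(Measure.pi fun _ => μ) := by
        simp [inv_mul_cancel_left₀ hn']
    _ ≤ (n : ℝ)⁻¹ * ∑ i, (∫ s, F s (s i) ∂(Measure.pi fun _ => μ) + β) := by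
        gcongr with i
        exact integral_integral_le_integral_apply_add hF hstable i (hint i)
    _ = _ := by simp [Finset.sum_add_distrib, mul_add, inv_mul_cancel_left₀ hn']

end ReplaceOneStability

section Generalization

variable {Ω 𝒵 E : Type*} [MeasurableSpace Ω] {P : Measure Ω} [IsProbabilityMeasure P]
  [MeasurableSpace 𝒵] {μ : Measure 𝒵} [IsProbabilityMeasure μ] {n : ℕ}

variable [PseudoMetricSpace E] [MeasurableSpace E] [OpensMeasurableSpace E]

theorem integral_sub_integral_empiricalRisk_le {ℓ : E → 𝒵 → ℝ} {L : ℝ≥0} {S : Ω → Fin n → 𝒵}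
    {V : Ω → E} {A : (Fin n → 𝒵) → E} {δ β : ℝ} (hn : 0 < n)
    (hS : MeasurePreserving S P (Measure.pi fun _ => μ))
    (hℓ : Measurable fun p : E × 𝒵 => ℓ p.1 p.2) (hLip : ∀ z, LipschitzWith L (ℓ · z))
    (hA : Measurable A) (hclose : ∀ ω, dist (V ω) (A (S ω)) ≤ δ)
    (hstable : ∀ s s' i, (∀ j, j ≠ i → s j = s' j) → dist (A s) (A s') ≤ β)
    (hint_emp : ∀ i, Integrable (fun ω => ℓ (V ω) (S ω i)) P)
    (hint_pop : Integrable (fun ω => ∫ z, ℓ (V ω) z ∂μ) P)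
    (hint_loss : ∀ w, Integrable (ℓ w) μ) :
    ∫ ω, ∫ z, ℓ (V ω) z ∂μ ∂P - ∫ ω, empiricalRisk ℓ (S ω) (V ω) ∂P ≤ L * (2 * δ + β) := by
  have hnear : ∀ ω (h : E → ℝ), LipschitzWith L h → |h (A (S ω)) - h (V ω)| ≤ L * δ :=
    fun ω h hh => by
      rw [← Real.dist_eq, dist_comm]
      exact (hh.dist_le_mul _ _).trans (mul_le_mul_of_nonneg_left (hclose ω) L.2)
  have hℓA : Measurable fun p : (Fin n → 𝒵) × 𝒵 => ℓ (A p.1) p.2 :=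
    hℓ.comp ((hA.comp measurable_fst).prodMk measurable_snd)
  have hLμ : LipschitzWith L fun w => ∫ z, ℓ w z ∂μ := lipschitzWith_integral hint_loss hLip
  have hpop := hS.abs_integral_sub_integral_le (φ := fun s => ∫ z, ℓ (A s) z ∂μ)
    (hLμ.continuous.measurable.comp hA) hint_pop fun ω => hnear ω _ hLμ
  have hemp := hS.abs_integral_sub_integral_le (ψ := fun ω => empiricalRisk ℓ (S ω) (V ω))
    (measurable_empiricalRisk hℓ hA)
    ((integrable_finsetSum _ fun i _ => hint_emp i).const_mul _)
    fun ω => hnear ω _ (lipschitzWith_empiricalRisk hLip _)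
  have hint_A : ∀ i, Integrable (fun s => ℓ (A s) (s i)) (Measure.pi fun _ => μ) := fun i =>
    have hmeas := hℓA.comp (measurable_id.prodMk (measurable_pi_apply i))
    (hS.integrable_comp hmeas.aestronglyMeasurable).1 <| integrable_of_abs_sub_le (hint_emp i)
      (hmeas.comp hS.measurable).aestronglyMeasurable fun ω => hnear ω _ (hLip (S ω i))
  have hgen := integral_integral_le_integral_empirical_add hn hℓA
    (fun s s' i hss' z => by
      rw [← Real.dist_eq]
      exact ((hLip z).dist_le_mul _ _).trans
        (mul_le_mul_of_nonneg_left (hstable s s' i hss') L.2)) hint_A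
  change _ ≤ ∫ s, empiricalRisk ℓ s (A s) ∂(Measure.pi fun _ => μ) + _ at hgen
  linarith [(abs_sub_le_iff.1 hpop).2, (abs_sub_le_iff.1 hemp).1]

end Generalization

theorem gen_gd_clb_general
    {d n : ℕ} (hn : 0 < n) {Ω 𝒵 : Type*}
    [MeasureSpace Ω] [IsProbabilityMeasure (ℙ : Measure Ω)]
    [MeasurableSpace 𝒵]
    (μ : Measure 𝒵) [IsProbabilityMeasure μ]
    (Z : Fin n → Ω → 𝒵) (hZmeas : ∀ i, Measurable (Z i))
    (hiid : iIndepFun Z ℙ)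
    (hlaw : ∀ i, Measure.map (Z i) ℙ = μ)
    (ℓ : EuclideanSpace ℝ (Fin d) → 𝒵 → ℝ) (L : ℝ≥0)
    (hℓmeas : Measurable (fun p : EuclideanSpace ℝ (Fin d) × 𝒵 => ℓ p.1 p.2))
    (hconv : ∀ z, ConvexOn ℝ Set.univ (fun w => ℓ w z))
    (hLip : ∀ z, LipschitzWith L (fun w => ℓ w z))
    (𝒲 : Set (EuclideanSpace ℝ (Fin d)))
    (h𝒲conv : Convex ℝ 𝒲)
    -- `proj` is the Euclidean projection onto `𝒲`
    (proj : EuclideanSpace ℝ (Fin d) → EuclideanSpace ℝ (Fin d))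
    (hproj_mem : ∀ x, proj x ∈ 𝒲)
    (hproj_near : ∀ x, ∀ w ∈ 𝒲, ‖x - proj x‖ ≤ ‖x - w‖)
    (η : ℝ) (hη : 0 < η) (T : ℕ)
    (w₀ : EuclideanSpace ℝ (Fin d))
    -- trajectory and measurable subgradient selection
    (W g : ℕ → Ω → EuclideanSpace ℝ (Fin d))
    (hsubgrad : ∀ t ω, ∀ v : EuclideanSpace ℝ (Fin d),
      (n : ℝ)⁻¹ * ∑ i, ℓ (W t ω) (Z i ω) + ⟪g t ω, v - W t ω⟫
        ≤ (n : ℝ)⁻¹ * ∑ i, ℓ v (Z i ω))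
    (hW0 : ∀ ω, W 0 ω = w₀)
    (hWrec : ∀ t ω, W (t + 1) ω = proj (W t ω - η • g t ω))
    (hint_emp : ∀ i, Integrable (fun ω => ℓ (W T ω) (Z i ω)) ℙ)
    (hint_pop : Integrable (fun ω => ∫ z, ℓ (W T ω) z ∂μ) ℙ)
    (hint_loss : ∀ w, Integrable (fun z => ℓ w z) μ) :
    (∫ ω, ∫ z, ℓ (W T ω) z ∂μ ∂ℙ) - (∫ ω, (n : ℝ)⁻¹ * ∑ i, ℓ (W T ω) (Z i ω) ∂ℙ)
      ≤ 8 * (L : ℝ) ^ 2 * Real.sqrt T * η + 8 * (L : ℝ) ^ 2 * T * η / n := by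
  set S : Ω → Fin n → 𝒵 := fun ω i => Z i ω
  have hS : MeasurePreserving S ℙ (Measure.pi fun _ => μ) := ⟨measurable_pi_lambda _ hZmeas, by
    rw [hiid.map_fun_eq_pi_map fun i => (hZmeas i).aemeasurable]; simp [hlaw]⟩
  have hproj := h𝒲conv.lipschitzWith_one_of_isNearest hproj_mem hproj_near
  set A := fun s : Fin n → 𝒵 => proxTraj η (empiricalRisk ℓ s) proj w₀ T
  have hA : Measurable A := measurable_proxTraj hη hproj.continuous.measurable
    (fun _ => measurable_empiricalRisk hℓmeas measurable_const) (convexOn_empiricalRisk hconv)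
    (lipschitzWith_empiricalRisk hLip) T
  have hgap := integral_sub_integral_empiricalRisk_le hn hS hℓmeas hLip hA
    (δ := Real.sqrt T * (η * L)) (β := T * (η * (2 * L / n)))
    (fun ω => by
      simpa [dist_eq_norm] using norm_sub_proxTraj_le hη hproj (convexOn_empiricalRisk hconv _)
        (lipschitzWith_empiricalRisk hLip _) (hW0 ω) (fun t => hWrec t ω)
        (fun t => hsubgrad t ω) T)
    (fun s s' i hss' => by
      simpa [dist_eq_norm] using norm_proxTraj_empiricalRisk_sub_le hη hproj hconv hLip hss' T)
    hint_emp hint_pop hint_loss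
  have ha : 0 ≤ (L : ℝ) ^ 2 * Real.sqrt T * η := by positivity
  have hb : 0 ≤ (L : ℝ) ^ 2 * T * η / n := by positivity
  calc _ ≤ _ := hgap
    _ = 2 * ((L : ℝ) ^ 2 * Real.sqrt T * η) + 2 * ((L : ℝ) ^ 2 * T * η / n) := by ring
    _ ≤ 8 * ((L : ℝ) ^ 2 * Real.sqrt T * η) + 8 * ((L : ℝ) ^ 2 * T * η / n) := by linarith
    _ = _ := by ring

/-- Generalization of full-batch projected subgradient descent on convex-Lipschitz-bounded
problems: for any CLB problem (`ℓ(·, z)` convex and `L`-Lipschitz, domain `𝒲` closed convex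
with diameter at most `D`) and any data distribution `μ`, the terminal iterate `W_T` of
projected subgradient descent with step size `η` started from a fixed `w₀ ∈ 𝒲` satisfies
`E[L_μ(W_T)] − E[L_S(W_T)] ≤ 8L²√T·η + 8L²Tη/n`. Since the theorem is universally
quantified over the problem and the distribution, the bound holds uniformly over the
class `𝒞_{L,D}` and over all `μ`. -/
theorem gen_gd_clb
    {d n : ℕ} (hn : 0 < n) {Ω 𝒵 : Type*}
    [MeasureSpace Ω] [IsProbabilityMeasure (ℙ : Measure Ω)]
    [MeasurableSpace 𝒵] [StandardBorelSpace 𝒵]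
    (μ : Measure 𝒵) [IsProbabilityMeasure μ]
    (Z : Fin n → Ω → 𝒵) (hZmeas : ∀ i, Measurable (Z i))
    (hiid : iIndepFun Z ℙ)
    (hlaw : ∀ i, Measure.map (Z i) ℙ = μ)
    (ℓ : EuclideanSpace ℝ (Fin d) → 𝒵 → ℝ) (L : ℝ≥0) (hL : 0 < (L : ℝ)) (D : ℝ) (hD : 0 < D)
    (hℓmeas : Measurable (fun p : EuclideanSpace ℝ (Fin d) × 𝒵 => ℓ p.1 p.2))
    (hconv : ∀ z, ConvexOn ℝ Set.univ (fun w => ℓ w z))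
    (hLip : ∀ z, LipschitzWith L (fun w => ℓ w z))
    (𝒲 : Set (EuclideanSpace ℝ (Fin d))) (h𝒲ne : 𝒲.Nonempty)
    (h𝒲closed : IsClosed 𝒲) (h𝒲conv : Convex ℝ 𝒲)
    (h𝒲diam : ∀ w ∈ 𝒲, ∀ w' ∈ 𝒲, ‖w - w'‖ ≤ D)
    -- `proj` is the Euclidean projection onto `𝒲`
    (proj : EuclideanSpace ℝ (Fin d) → EuclideanSpace ℝ (Fin d))
    (hproj_mem : ∀ x, proj x ∈ 𝒲)
    (hproj_near : ∀ x, ∀ w ∈ 𝒲, ‖x - proj x‖ ≤ ‖x - w‖)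
    (η : ℝ) (hη : 0 < η) (T : ℕ) (hT : 0 < T)
    (w₀ : EuclideanSpace ℝ (Fin d)) (hw₀ : w₀ ∈ 𝒲)
    -- trajectory and measurable subgradient selection
    (W g : ℕ → Ω → EuclideanSpace ℝ (Fin d))
    (hWmeas : ∀ t, Measurable (W t)) (hgmeas : ∀ t, Measurable (g t))
    (hsubgrad : ∀ t ω, ∀ v : EuclideanSpace ℝ (Fin d),
      (n : ℝ)⁻¹ * ∑ i, ℓ (W t ω) (Z i ω) + ⟪g t ω, v - W t ω⟫
        ≤ (n : ℝ)⁻¹ * ∑ i, ℓ v (Z i ω))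
    (hW0 : ∀ ω, W 0 ω = w₀)
    (hWrec : ∀ t ω, W (t + 1) ω = proj (W t ω - η • g t ω))
    (hint_emp : ∀ i, Integrable (fun ω => ℓ (W T ω) (Z i ω)) ℙ)
    (hint_pop : Integrable (fun ω => ∫ z, ℓ (W T ω) z ∂μ) ℙ)
    (hint_loss : ∀ w, Integrable (fun z => ℓ w z) μ) :
    (∫ ω, ∫ z, ℓ (W T ω) z ∂μ ∂ℙ) - (∫ ω, (n : ℝ)⁻¹ * ∑ i, ℓ (W T ω) (Z i ω) ∂ℙ)
      ≤ 8 * (L : ℝ) ^ 2 * Real.sqrt T * η + 8 * (L : ℝ) ^ 2 * T * η / n :=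
  gen_gd_clb_general hn μ Z hZmeas hiid hlaw ℓ L hℓmeas hconv hLip 𝒲 h𝒲conv proj hproj_mem
    hproj_near η hη T w₀ W g hsubgrad hW0 hWrec hint_emp hint_pop hint_loss
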